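/- For every m ≥ 0, the polynomial identity P_{pm}^p(t) = t^{m·Δ_{p−2}} · P_m^p(t) holds. -/

import Mathlib

/-!
Along an odometer orbit the lowest digit runs through the cycle `0, 1, …, p - 1` once every `p`
steps. During one cycle `φ` takes each of the values `0, …, p - 2` once, contributing `Δ_{p-2}`,
and at the carry (lowest digit `p - 1`) it takes the value of `φ` at the shifted sequence `σ x`,
while `σ x` advances by exactly one odometer step. Hence on `Γ*`
`φ^(pm)(x) = m Δ_{p-2} + φ^(m)(σ x)`. Through the base-`p` digit map the shift `σ` is
`u ↦ fract (p u)` on `[0, 1)`, so it preserves `λ`, and `π_{pm}(j) = π_m(j - m Δ_{p-2})`.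
-/

open MeasureTheory
open scoped NNReal ENNReal

namespace Chacon

/-- The space of digit sequences with digits in `{0, …, p-1}`. -/
def Gamma (p : ℕ) : Set (ℕ → ℕ) := {x | ∀ i, x i < p}

/-- `Γ*`: sequences with digits `< p` having infinitely many coordinates `≠ p - 1`. -/
def GammaStar (p : ℕ) : Set (ℕ → ℕ) :=
  {x | (∀ i, x i < p) ∧ {i | x i ≠ p - 1}.Infinite}

/-- The least index `i` with `x i ≠ p - 1`. -/
noncomputable def firstNot (p : ℕ) (x : ℕ → ℕ) : ℕ :=
  sInf {i | x i ≠ p - 1}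

/-- `φ(x) = x_i` where `i` is the least index with `x_i ≠ p - 1`. -/
noncomputable def phi (p : ℕ) (x : ℕ → ℕ) : ℕ :=
  x (firstNot p x)

/-- The odometer `S` (addition of `1` with carry): the initial run of digits
`p - 1` is replaced by zeros, and the first digit `≠ p - 1` is increased by one. -/
noncomputable def odo (p : ℕ) (x : ℕ → ℕ) : ℕ → ℕ :=
  fun i =>
    if i < firstNot p x then 0
    else if i = firstNot p x then x i + 1
    else x i

/-- `φ^(m)(x) = ∑_{j=0}^{m-1} φ(S^j x)`. -/
noncomputable def phiSum (p m : ℕ) (x : ℕ → ℕ) : ℕ :=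
  ∑ j ∈ Finset.range m, phi p ((odo p)^[j] x)

/-- The base-`p` digit sequence of a real number `u`. -/
noncomputable def digitsOf (p : ℕ) (u : ℝ) : ℕ → ℕ :=
  fun i => (⌊u * (p : ℝ) ^ (i + 1)⌋).toNat % p

/-- `λ`: the product probability measure on digit sequences under which the
coordinates are i.i.d., uniformly distributed in `{0, …, p-1}`; it is realized
concretely as the distribution of the base-`p` digit sequence of a uniformly
distributed random point of `[0,1)`. -/
noncomputable def lam (p : ℕ) : Measure (ℕ → ℕ) :=
  Measure.map (digitsOf p) (volume.restrict (Set.Ico (0 : ℝ) 1))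

/-- `π_m(j) = λ({x : φ^(m)(x) = j})`. -/
noncomputable def pim (p m j : ℕ) : ℝ≥0∞ :=
  lam p {x | phiSum p m x = j}

/-- `P_m^p(t) = ∑_{j ≥ 0} π_m(j) t^j`, a real polynomial
(the sum is over `0 ≤ j ≤ m (p-2)` since `0 ≤ φ^(m) ≤ m (p-2)` a.s.). -/
noncomputable def P (p m : ℕ) (t : ℝ) : ℝ :=
  ∑ j ∈ Finset.range (m * (p - 2) + 1), (pim p m j).toReal * t ^ j

/-- The `n`-th triangular number `Δ_n = n (n+1) / 2`. -/
def tri (n : ℕ) : ℕ := n * (n + 1) / 2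

/-- The degree `D_m` of `P_m^p`: the largest `j` with `π_m(j) ≠ 0`. -/
noncomputable def D (p m : ℕ) : ℕ := sSup {j | pim p m j ≠ 0}

/-- The lower degree `d_m` of `P_m^p`: the least `j` with `π_m(j) ≠ 0`. -/
noncomputable def d (p m : ℕ) : ℕ := sInf {j | pim p m j ≠ 0}

open Set Function

def shift (x : ℕ → ℕ) : ℕ → ℕ := fun i => x (i + 1)

section

variable {p : ℕ} {x : ℕ → ℕ}

lemma shift_update_zero (v : ℕ) : shift (update x 0 v) = shift x := by
  funext i; simp [shift]

lemma firstNot_of_ne (h : x 0 ≠ p - 1) : firstNot p x = 0 :=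
  Nat.sInf_eq_zero.2 (Or.inl h)

lemma phi_of_ne (h : x 0 ≠ p - 1) : phi p x = x 0 := by
  rw [phi, firstNot_of_ne h]

lemma odo_of_ne (h : x 0 ≠ p - 1) : odo p x = update x 0 (x 0 + 1) := by
  funext i
  rcases eq_or_ne i 0 with rfl | hi <;> simp [odo, firstNot_of_ne h, *]

lemma apply_firstNot_ne (hx : ∃ i, x i ≠ p - 1) : x (firstNot p x) ≠ p - 1 :=
  Nat.sInf_mem hx

lemma firstNot_of_eq (h : x 0 = p - 1) (hx : ∃ i, shift x i ≠ p - 1) :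
    firstNot p x = firstNot p (shift x) + 1 := by
  have hmem : firstNot p (shift x) + 1 ∈ {i | x i ≠ p - 1} := Nat.sInf_mem hx
  have hmin := apply_firstNot_ne ⟨_, hmem⟩
  refine le_antisymm (Nat.sInf_le hmem) ?_
  obtain ⟨k, hk⟩ :=
    Nat.exists_eq_add_one_of_ne_zero fun h0 : firstNot p x = 0 => hmin (h0 ▸ h)
  have : firstNot p (shift x) ≤ k := Nat.sInf_le (show x (k + 1) ≠ p - 1 from hk ▸ hmin)
  omega

lemma firstNot_update_sub_one (hx : ∃ i, shift x i ≠ p - 1) :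
    firstNot p (update x 0 (p - 1)) = firstNot p (shift x) + 1 := by
  rw [firstNot_of_eq (update_self ..) (by rwa [shift_update_zero]), shift_update_zero]

lemma phi_update_sub_one (hx : ∃ i, shift x i ≠ p - 1) :
    phi p (update x 0 (p - 1)) = phi p (shift x) := by
  rw [phi, firstNot_update_sub_one hx, update_of_ne (Nat.succ_ne_zero _)]; rfl

lemma odo_update_sub_one_zero (hx : ∃ i, shift x i ≠ p - 1) :
    odo p (update x 0 (p - 1)) 0 = 0 := by
  simp [odo, firstNot_update_sub_one hx]

lemma shift_odo_update_sub_one (hx : ∃ i, shift x i ≠ p - 1) :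
    shift (odo p (update x 0 (p - 1))) = odo p (shift x) := by
  funext i
  simp [shift, odo, firstNot_update_sub_one hx]

lemma iterate_odo_of_le {j : ℕ} (h : x 0 + j ≤ p - 1) :
    (odo p)^[j] x = update x 0 (x 0 + j) := by
  induction j with
  | zero => simp
  | succ j ih =>
    rw [iterate_succ_apply', ih (by omega), odo_of_ne (by simp only [update_self]; omega)]
    simp [add_assoc]

lemma phiSum_add (a b : ℕ) :
    phiSum p (a + b) x = phiSum p a x + phiSum p b ((odo p)^[a] x) := by
  rw [phiSum, phiSum, phiSum, Finset.sum_range_add]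
  congr 1
  exact Finset.sum_congr rfl fun i _ => by rw [add_comm, iterate_add_apply]

lemma phiSum_one : phiSum p 1 x = phi p x := by
  simp [phiSum]

lemma phiSum_of_le {j : ℕ} (h : x 0 + j ≤ p - 1) :
    phiSum p j x = ∑ i ∈ Finset.range j, (x 0 + i) := by
  refine Finset.sum_congr rfl fun i hi => ?_
  rw [Finset.mem_range] at hi
  rw [iterate_odo_of_le (by omega), phi_of_ne (by simp only [update_self]; omega), update_self]

lemma shift_mem_gammaStar (hx : x ∈ GammaStar p) : shift x ∈ GammaStar p := by
  refine ⟨fun i => hx.1 (i + 1), Set.infinite_of_forall_exists_gt fun a => ?_⟩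
  obtain ⟨b, hb, hab⟩ := hx.2.exists_gt (a + 1)
  exact ⟨b - 1, by simpa [shift, show b - 1 + 1 = b by omega] using hb, by omega⟩

lemma odo_mem_gammaStar (hx : x ∈ GammaStar p) : odo p x ∈ GammaStar p := by
  have hmin := apply_firstNot_ne hx.2.nonempty
  have hlt := hx.1 (firstNot p x)
  refine ⟨fun i => ?_, Set.infinite_of_forall_exists_gt fun a => ?_⟩
  · unfold odo
    split_ifs with h₁ h₂
    · omega
    · rw [h₂]; omega
    · exact hx.1 i
  · obtain ⟨b, hb, hab⟩ := hx.2.exists_gt (max a (firstNot p x))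
    refine ⟨b, ?_, by omega⟩
    simpa [odo, show ¬ b < firstNot p x by omega, show b ≠ firstNot p x by omega] using hb

lemma iterate_odo_mem_gammaStar (hx : x ∈ GammaStar p) (j : ℕ) :
    (odo p)^[j] x ∈ GammaStar p := by
  induction j with
  | zero => exact hx
  | succ j ih => rw [iterate_succ_apply']; exact odo_mem_gammaStar ih

lemma two_le_of_mem_gammaStar (hx : x ∈ GammaStar p) : 2 ≤ p := by
  obtain ⟨i, hi : x i ≠ p - 1⟩ := hx.2.nonempty
  have := hx.1 i
  omega

lemma phi_le_of_mem_gammaStar (hx : x ∈ GammaStar p) : phi p x ≤ p - 2 := by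
  have hmin := apply_firstNot_ne hx.2.nonempty
  have hlt := hx.1 (firstNot p x)
  rw [phi]; omega

lemma phiSum_le_of_mem_gammaStar (hx : x ∈ GammaStar p) (m : ℕ) :
    phiSum p m x ≤ m * (p - 2) :=
  (Finset.sum_le_sum fun j _ => phi_le_of_mem_gammaStar (iterate_odo_mem_gammaStar hx j)).trans
    (by simp)

lemma tri_eq_sum_range (n : ℕ) : tri n = ∑ i ∈ Finset.range (n + 1), i := by
  rw [Finset.sum_range_id, tri, Nat.add_sub_cancel, mul_comm]

lemma iterate_odo_eq_update_sub_one (hx : x 0 < p) :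
    (odo p)^[p - 1 - x 0] x = update x 0 (p - 1) := by
  rw [iterate_odo_of_le (by omega), show x 0 + (p - 1 - x 0) = p - 1 by omega]

lemma phiSum_self (hx : x ∈ GammaStar p) : phiSum p p x = tri (p - 2) + phi p (shift x) := by
  have hx0 := hx.1 0
  have hne : ∃ i, shift x i ≠ p - 1 := (shift_mem_gammaStar hx).2.nonempty
  have hcarry : phiSum p (x 0) (odo p (update x 0 (p - 1))) = ∑ i ∈ Finset.range (x 0), i := by
    rw [phiSum_of_le (by rw [odo_update_sub_one_zero hne]; omega), odo_update_sub_one_zero hne]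
    simp
  calc phiSum p p x = phiSum p (p - 1 - x 0) x + phiSum p (1 + x 0) (update x 0 (p - 1)) := by
        rw [← iterate_odo_eq_update_sub_one hx0, ← phiSum_add]; congr 1; omega
    _ = ∑ i ∈ Finset.range (p - 1 - x 0), (x 0 + i)
          + (phi p (update x 0 (p - 1)) + ∑ i ∈ Finset.range (x 0), i) := by
        rw [phiSum_of_le (by omega), phiSum_add 1, phiSum_one, iterate_one, ← hcarry]
    _ = tri (p - 2) + phi p (shift x) := by
        have := two_le_of_mem_gammaStar hx
        rw [phi_update_sub_one hne, tri_eq_sum_range,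
          show p - 2 + 1 = x 0 + (p - 1 - x 0) by omega, Finset.sum_range_add]
        ring

lemma shift_iterate_odo_self (hx : x ∈ GammaStar p) :
    shift ((odo p)^[p] x) = odo p (shift x) := by
  have hx0 := hx.1 0
  have hne : ∃ i, shift x i ≠ p - 1 := (shift_mem_gammaStar hx).2.nonempty
  have hsplit : (odo p)^[p] x = (odo p)^[x 0] (odo p (update x 0 (p - 1))) := by
    rw [← iterate_odo_eq_update_sub_one hx0, ← iterate_succ_apply' (odo p),
      ← iterate_add_apply]
    congr 1; omega
  rw [hsplit, iterate_odo_of_le (by rw [odo_update_sub_one_zero hne]; omega), shift_update_zero,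
    shift_odo_update_sub_one hne]

lemma shift_iterate_odo_mul (hx : x ∈ GammaStar p) (m : ℕ) :
    shift ((odo p)^[p * m] x) = (odo p)^[m] (shift x) := by
  induction m with
  | zero => rfl
  | succ m ih =>
    rw [mul_add_one, add_comm, iterate_add_apply,
      shift_iterate_odo_self (iterate_odo_mem_gammaStar hx _), ih, iterate_succ_apply']

lemma phiSum_mul (hx : x ∈ GammaStar p) (m : ℕ) :
    phiSum p (p * m) x = m * tri (p - 2) + phiSum p m (shift x) := by
  induction m with
  | zero => simp [phiSum]
  | succ m ih =>
    rw [mul_add_one, phiSum_add, ih, phiSum_self (iterate_odo_mem_gammaStar hx _),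
      shift_iterate_odo_mul hx, phiSum_add m 1, phiSum_one]
    ring

lemma firstNot_eq_iff {n : ℕ} :
    firstNot p x = n ↔
      (x n ≠ p - 1 ∧ ∀ m < n, x m = p - 1) ∨ (n = 0 ∧ ∀ i, x i = p - 1) := by
  by_cases h : ∃ i, x i ≠ p - 1
  · constructor
    · rintro rfl
      exact Or.inl ⟨Nat.sInf_mem h, fun m hm => not_not.1 (Nat.notMem_of_lt_sInf hm)⟩
    · rintro (⟨hn, hlt⟩ | ⟨-, hall⟩)
      · exact le_antisymm (Nat.sInf_le hn) (not_lt.1 fun h' => Nat.sInf_mem h (hlt _ h'))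
      · exact absurd (hall _) h.choose_spec
  · push Not at h
    simp [firstNot, h, eq_comm]

lemma measurable_firstNot : Measurable (firstNot p) :=
  measurable_to_countable' fun n => by
    simp only [preimage, mem_singleton_iff, firstNot_eq_iff]
    exact measurableSet_setOfPred.2 (by fun_prop)

lemma measurable_phi : Measurable (phi p) :=
  (measurable_from_prod_countable_left (f := fun q : (ℕ → ℕ) × ℕ => q.1 q.2)
    fun n => measurable_pi_apply n).comp (measurable_id.prodMk measurable_firstNot)

lemma measurable_odo : Measurable (odo p) := by
  refine measurable_pi_lambda _ fun i => ?_
  unfold odo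
  exact Measurable.ite (measurable_firstNot measurableSet_Ioi) measurable_const
    (Measurable.ite (measurable_firstNot (measurableSet_singleton i))
      ((measurable_pi_apply i).add_const 1) (measurable_pi_apply i))

lemma measurable_phiSum (m : ℕ) : Measurable (phiSum p m) :=
  Finset.measurable_sum _ fun j _ => measurable_phi.comp (measurable_odo.iterate j)

lemma measurable_digitsOf : Measurable (digitsOf p) :=
  measurable_pi_lambda _ fun _ =>
    (Measurable.of_discrete (f := fun z : ℤ => z.toNat % p)).comp
      (Int.measurable_floor.comp (measurable_id.mul_const _))

lemma measurable_shift : Measurable shift :=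
  measurable_pi_lambda _ fun i => measurable_pi_apply (i + 1)

lemma shift_digitsOf {u : ℝ} (hu : 0 ≤ u) :
    shift (digitsOf p u) = digitsOf p (Int.fract (p * u)) := by
  funext i
  have hfloor : ⌊Int.fract (p * u) * (p : ℝ) ^ (i + 1)⌋
      = ⌊u * (p : ℝ) ^ (i + 1 + 1)⌋ - p * (⌊p * u⌋ * p ^ i) := by
    rw [← Int.floor_sub_intCast]; congr 1; rw [Int.fract]; push_cast; ring
  have htoNat : ∀ z : ℤ, 0 ≤ z → z.toNat % p = (z % p).toNat := fun z hz => by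
    rw [Int.toNat_emod hz (by positivity), Int.toNat_natCast]
  show ⌊u * (p : ℝ) ^ (i + 1 + 1)⌋.toNat % p
    = ⌊Int.fract (p * u) * (p : ℝ) ^ (i + 1)⌋.toNat % p
  rw [htoNat _ (Int.floor_nonneg.2 (by positivity)),
    htoNat _ (Int.floor_nonneg.2 (mul_nonneg (Int.fract_nonneg _) (by positivity))),
    hfloor, Int.sub_mul_emod_self_left]

lemma fract_mul_eq_sub_digitsOf_zero (hp : 0 < p) {w : ℝ} (hw : w ∈ Ico 0 1) :
    Int.fract (p * w) = p * w - digitsOf p w 0 := by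
  have h0 : 0 ≤ (p : ℝ) * w := mul_nonneg p.cast_nonneg hw.1
  have hlt : ⌊(p : ℝ) * w⌋₊ < p :=
    (Nat.floor_lt h0).2 (mul_lt_of_lt_one_right (by exact_mod_cast hp) hw.2)
  rw [digitsOf, Int.floor_toNat, pow_one, mul_comm w, Nat.mod_eq_of_lt hlt,
    natCast_floor_eq_intCast_floor h0, Int.self_sub_floor]

lemma pow_mul_one_sub_le_one (hp : 0 < p) (k : ℕ) {w : ℝ} (hw : w ∈ Ico 0 1)
    (h : ∀ i < k, digitsOf p w i = p - 1) : (p : ℝ) ^ k * (1 - w) ≤ 1 := by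
  induction k generalizing w with
  | zero => simpa using hw.1
  | succ k ih =>
    -- a leading digit `p - 1` means `1 - fract (p w) = p (1 - w)`
    have hstep := ih ⟨Int.fract_nonneg _, Int.fract_lt_one _⟩ fun i hi => by
      rw [← shift_digitsOf hw.1]; exact h (i + 1) (by omega)
    rw [fract_mul_eq_sub_digitsOf_zero hp hw, h 0 k.succ_pos, Nat.cast_sub hp,
      Nat.cast_one] at hstep
    linear_combination hstep

lemma exists_le_digitsOf_ne (hp : 1 < p) (N : ℕ) {w : ℝ} (hw : w ∈ Ico 0 1) :
    ∃ i, N ≤ i ∧ digitsOf p w i ≠ p - 1 := by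
  induction N generalizing w with
  | zero =>
    by_contra! h
    obtain ⟨k, hk⟩ := pow_unbounded_of_one_lt (1 - w)⁻¹ (Nat.one_lt_cast.2 hp)
    rw [inv_lt_iff_one_lt_mul₀ (sub_pos.2 hw.2)] at hk
    exact hk.not_ge (pow_mul_one_sub_le_one (by omega) k hw fun i _ => h i i.zero_le)
  | succ N ih =>
    obtain ⟨i, hi, hne⟩ := ih ⟨Int.fract_nonneg ((p : ℝ) * w), Int.fract_lt_one _⟩
    rw [← shift_digitsOf hw.1] at hne
    exact ⟨i + 1, by omega, hne⟩

lemma digitsOf_mem_gammaStar (hp : 1 < p) {u : ℝ} (hu : u ∈ Ico 0 1) :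
    digitsOf p u ∈ GammaStar p := by
  refine ⟨fun _ => Nat.mod_lt _ (by omega), Set.infinite_of_forall_exists_gt fun a => ?_⟩
  obtain ⟨i, hi, hne⟩ := exists_le_digitsOf_ne hp (a + 1) hu
  exact ⟨i, hne, hi⟩

lemma measurePreserving_fract_natCast_mul {n : ℕ} (hn : 1 < n) :
    MeasurePreserving (fun u : ℝ => Int.fract (n * u))
      (volume.restrict (Ico 0 1)) (volume.restrict (Ico 0 1)) := by
  set μ : Measure ℝ := volume.restrict (Ico 0 1)
  -- on `ℝ ⧸ ℤ` the map becomes `y ↦ n • y`, which preserves Haar measure; `f` reads a point of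
  -- the circle back in `[0, 1)`
  let f : UnitAddCircle → ℝ := fun y => (AddCircle.equivIco 1 0 y : ℝ)
  have hf : Measurable f :=
    measurable_subtype_coe.comp (AddCircle.measurableEquivIco 1 0).measurable
  have hf_mk : ∀ u : ℝ, f u = Int.fract u := fun u => by simp [f]
  have hmk : MeasurePreserving ((↑) : ℝ → UnitAddCircle) μ volume := by
    simpa [μ, Measure.restrict_congr_set Ico_ae_eq_Ioc] using UnitAddCircle.measurePreserving_mk 0
  have hfract : μ.map Int.fract = μ := by
    conv_rhs => rw [← Measure.map_id (μ := μ)]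
    exact Measure.map_congr <| (ae_restrict_iff' measurableSet_Ico).2 <|
      ae_of_all _ fun u hu => Int.fract_eq_self.2 hu
  have hT : (fun u : ℝ => Int.fract (n * u))
      = f ∘ (fun y => n • y) ∘ ((↑) : ℝ → UnitAddCircle) := by
    funext u; simp only [comp_apply, ← AddCircle.coe_nsmul, hf_mk, nsmul_eq_mul]
  have hnsmul := (AddCircle.ergodic_nsmul (T := 1) hn).toMeasurePreserving
  refine ⟨measurable_fract.comp (measurable_const_mul _), ?_⟩
  rw [hT]
  calc μ.map (f ∘ (fun y => n • y) ∘ ((↑) : ℝ → UnitAddCircle))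
      = ((μ.map (↑)).map fun y : UnitAddCircle => n • y).map f := by
        rw [Measure.map_map hnsmul.measurable hmk.measurable,
          Measure.map_map hf (hnsmul.measurable.comp hmk.measurable)]
    _ = (μ.map ((↑) : ℝ → UnitAddCircle)).map f := by rw [hmk.map_eq, hnsmul.map_eq]
    _ = μ := by
        rw [Measure.map_map hf hmk.measurable, show f ∘ (↑) = Int.fract from funext hf_mk,
          hfract]

lemma ae_lam_of_forall_mem_gammaStar (hp : 1 < p) {q : (ℕ → ℕ) → Prop}
    (hq : MeasurableSet {x | q x}) (h : ∀ x ∈ GammaStar p, q x) : ∀ᵐ x ∂lam p, q x :=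
  (ae_map_iff measurable_digitsOf.aemeasurable hq).2 <|
    (ae_restrict_iff' measurableSet_Ico).2 <|
      ae_of_all _ fun _ hu => h _ (digitsOf_mem_gammaStar hp hu)

lemma measurePreserving_shift_lam (hp : 1 < p) : MeasurePreserving shift (lam p) (lam p) := by
  have hT := measurePreserving_fract_natCast_mul hp
  refine ⟨measurable_shift, ?_⟩
  calc (lam p).map shift
      = (volume.restrict (Ico (0 : ℝ) 1)).map (digitsOf p ∘ fun u => Int.fract (p * u)) := by
        rw [lam, Measure.map_map measurable_shift measurable_digitsOf]
        exact Measure.map_congr <| (ae_restrict_iff' measurableSet_Ico).2 <|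
          ae_of_all _ fun u hu => shift_digitsOf hu.1
    _ = lam p := by
        rw [← Measure.map_map measurable_digitsOf hT.measurable, hT.map_eq, lam]

lemma pim_eq_zero_of_lt (hp : 1 < p) {m j : ℕ} (hj : m * (p - 2) < j) : pim p m j = 0 := by
  have hle : ∀ᵐ x ∂lam p, phiSum p m x ≤ m * (p - 2) :=
    ae_lam_of_forall_mem_gammaStar hp (measurable_phiSum m measurableSet_Iic)
      fun x hx => phiSum_le_of_mem_gammaStar hx m
  rw [pim, measure_eq_zero_iff_ae_notMem]
  filter_upwards [hle] with x hx
  exact fun h : phiSum p m x = j => by omega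

lemma pim_mul (hp : 1 < p) (m j : ℕ) :
    pim p (p * m) j = lam p {x | m * tri (p - 2) + phiSum p m x = j} := by
  have hsum : ∀ᵐ x ∂lam p, phiSum p (p * m) x = m * tri (p - 2) + phiSum p m (shift x) :=
    ae_lam_of_forall_mem_gammaStar hp
      (measurableSet_eq_fun (measurable_phiSum _)
        ((measurable_phiSum m).const_add _ |>.comp measurable_shift))
      fun x hx => phiSum_mul hx m
  have hset : MeasurableSet {x | m * tri (p - 2) + phiSum p m x = j} :=
    (measurable_phiSum m).const_add _ (measurableSet_singleton j)
  rw [pim, ← (measurePreserving_shift_lam hp).measure_preimage hset.nullMeasurableSet]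
  refine measure_congr (hsum.mono fun x hx => ?_)
  change (phiSum p (p * m) x = j) = (m * tri (p - 2) + phiSum p m (shift x) = j)
  rw [hx]

lemma pim_mul_add (hp : 1 < p) (m j : ℕ) : pim p (p * m) (m * tri (p - 2) + j) = pim p m j := by
  rw [pim_mul hp, pim]
  simp only [add_right_inj]

lemma pim_mul_of_lt (hp : 1 < p) {m j : ℕ} (hj : j < m * tri (p - 2)) : pim p (p * m) j = 0 := by
  rw [pim_mul hp, ← measure_empty (μ := lam p)]
  exact congrArg _ (eq_empty_of_forall_notMem fun x (hx : m * tri (p - 2) + phiSum p m x = j) =>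
    by omega)

lemma sum_range_pim_eq_of_le {m M M' : ℕ} (hM : M ≤ M') (h : ∀ j, M < j → pim p m j = 0)
    (t : ℝ) :
    ∑ j ∈ Finset.range (M + 1), (pim p m j).toReal * t ^ j
      = ∑ j ∈ Finset.range (M' + 1), (pim p m j).toReal * t ^ j :=
  Finset.sum_subset (Finset.range_subset_range.2 (by omega)) fun j _ hj => by
    rw [h j (by simpa using hj), ENNReal.toReal_zero, zero_mul]

lemma P_eq_sum_range (hp : 1 < p) {m N : ℕ} (h : ∀ j, N < j → pim p m j = 0) (t : ℝ) :
    P p m t = ∑ j ∈ Finset.range (N + 1), (pim p m j).toReal * t ^ j := by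
  rcases le_total (m * (p - 2)) N with hle | hle
  · exact sum_range_pim_eq_of_le hle (fun j => pim_eq_zero_of_lt hp) t
  · exact (sum_range_pim_eq_of_le hle h t).symm

end

/-- `P_{pm}^p(t) = t^{m Δ_{p-2}} P_m^p(t)` for every `m ≥ 0`. -/
theorem statement_6 (p : ℕ) (hp : 3 ≤ p) (m : ℕ) (t : ℝ) :
    P p (p * m) t = t ^ (m * tri (p - 2)) * P p m t := by
  have hp1 : 1 < p := by omega
  have hvanish : ∀ j, m * tri (p - 2) + m * (p - 2) < j → pim p (p * m) j = 0 := fun j hj => by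
    obtain ⟨i, rfl⟩ := Nat.exists_eq_add_of_le (show m * tri (p - 2) ≤ j by omega)
    rw [pim_mul_add hp1, pim_eq_zero_of_lt hp1 (by omega)]
  rw [P_eq_sum_range hp1 hvanish, add_assoc, Finset.sum_range_add, P, Finset.mul_sum,
    Finset.sum_eq_zero fun j hj => by rw [pim_mul_of_lt hp1 (Finset.mem_range.1 hj)]; simp,
    zero_add]
  refine Finset.sum_congr rfl fun j _ => ?_
  rw [pim_mul_add hp1, pow_add]
  ring

end Chacon
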